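/- For n ≥ 3, the number of functions c : ZMod n → {Empty, Blue, Red} such that for all i, {c(i), c(i+1)} ≠ {Blue, Red} (no two cyclically adjacent vertices have different non-Empty colors) equals (1+√2)^n + (1-√2)^n + 1, as an identity of real numbers. -/

import Mathlib

inductive Color : Type
  | Empty | Blue | Red
  deriving DecidableEq

instance : Fintype Color :=
  ⟨{Color.Empty, Color.Blue, Color.Red}, fun x => by cases x <;> simp⟩

/-!
A cyclic colouring of `ZMod n` is a closed walk of length `n` in the compatibility relation,
so the colourings are counted by the trace of the `n`-th power of its 0/1 transfer matrix `M`.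
By Cayley–Hamilton `M³ = 3M² - M - 1`, so `n ↦ tr (M ^ n)` satisfies the linear recurrence with
characteristic polynomial `(X - 1)(X² - 2X - 1)`. Its roots `1` and `1 ± √2` give geometric
solutions, and their sum agrees with `n ↦ tr (M ^ n)` at `n = 0, 1, 2`.
-/

open Finset Matrix

namespace Matrix

variable {α S : Type*} [Fintype α] [DecidableEq α] [CommSemiring S]

/-- `f` lists the inner vertices of a walk from `a` to `b`; `Fin.cons a f` and `Fin.snoc f b` are
the sources and the targets of its `n + 1` steps. -/
theorem pow_succ_apply_eq_sum_paths (A : Matrix α α S) (n : ℕ) (a b : α) :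
    (A ^ (n + 1)) a b =
      ∑ f : Fin n → α, ∏ i : Fin (n + 1),
        A ((Fin.cons a f : Fin (n + 1) → α) i) ((Fin.snoc f b : Fin (n + 1) → α) i) := by
  induction n generalizing a with
  | zero => simp [Fin.snoc]
  | succ n ih =>
    rw [pow_succ', mul_apply, ← (Fin.consEquiv fun _ => α).sum_comp, Fintype.sum_prod_type]
    refine sum_congr rfl fun c _ => ?_
    simp [Fin.consEquiv, ih, mul_sum, Fin.prod_univ_succ, ← Fin.cons_snoc_eq_snoc_cons]

theorem trace_pow_succ_eq_sum_cycles (A : Matrix α α S) (n : ℕ) :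
    trace (A ^ (n + 1)) = ∑ c : Fin (n + 1) → α, ∏ i, A (c i) (c (i + 1)) := by
  simp only [trace, diag, pow_succ_apply_eq_sum_paths, Fin.snoc_eq_cons_rotate, finRotate_apply]
  rw [← (Fin.consEquiv fun _ => α).sum_comp, Fintype.sum_prod_type]
  rfl

end Matrix

section TransferMatrix

variable {α : Type*} (S : Type*) (r : α → α → Prop) [DecidableRel r]

def transferMatrix [Zero S] [One S] : Matrix α α S :=
  of fun a b => if r a b then 1 else 0

theorem natCard_cyclic_eq_trace_transferMatrix_pow [Fintype α] [DecidableEq α] [CommSemiring S]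
    (n : ℕ) :
    (Nat.card {c : Fin (n + 1) → α // ∀ i, r (c i) (c (i + 1))} : S) =
      trace (transferMatrix S r ^ (n + 1)) := by
  simp only [trace_pow_succ_eq_sum_cycles, transferMatrix, of_apply, prod_boole, mem_univ,
    true_implies, sum_boole, Nat.card_eq_fintype_card, Fintype.card_subtype]

end TransferMatrix

theorem Color.sum_univ {β : Type*} [AddCommMonoid β] (f : Color → β) :
    ∑ c, f c = f .Empty + f .Blue + f .Red := by
  rw [show (univ : Finset Color) = {.Empty, .Blue, .Red} from rfl, sum_insert (by decide),
    sum_pair (by decide), add_assoc]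

def snortCompatible (a b : Color) : Prop :=
  ¬((a = Color.Blue ∧ b = Color.Red) ∨ (a = Color.Red ∧ b = Color.Blue))

instance : DecidableRel snortCompatible := fun _ _ => inferInstanceAs (Decidable ¬_)

noncomputable abbrev snortMatrix : Matrix Color Color ℝ := transferMatrix ℝ snortCompatible

theorem snortMatrix_pow_three :
    snortMatrix ^ 3 = (3 : ℝ) • snortMatrix ^ 2 - snortMatrix - 1 := by
  ext a b
  cases a <;> cases b <;>
    simp only [pow_succ, pow_zero, one_mul, mul_apply, Color.sum_univ, Matrix.smul_apply,
      Matrix.sub_apply, one_apply, snortMatrix, transferMatrix, of_apply, snortCompatible] <;>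
    simp <;> norm_num

def snortRecurrence : LinearRecurrence ℝ := ⟨3, ![-1, -1, 3]⟩

theorem snortRecurrence_isSolution_trace_pow :
    snortRecurrence.IsSolution fun n => trace (snortMatrix ^ n) := by
  intro n
  change trace (snortMatrix ^ (n + 3)) =
    ∑ i : Fin 3, ![-1, -1, 3] i * trace (snortMatrix ^ (n + i))
  simp [Fin.sum_univ_three, pow_add, snortMatrix_pow_three, mul_sub]
  ring

theorem snortRecurrence_isRoot_charPoly {q : ℝ} (hq : q ^ 3 = 3 * q ^ 2 - q - 1) :
    snortRecurrence.charPoly.IsRoot q := by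
  dsimp only [snortRecurrence]
  simp [LinearRecurrence.charPoly, Fin.sum_univ_three]
  linear_combination hq

theorem snortRecurrence_isSolution_closedForm :
    snortRecurrence.IsSolution fun n => (1 + √2) ^ n + (1 - √2) ^ n + 1 := by
  have h2 : √2 ^ 2 = 2 := Real.sq_sqrt zero_le_two
  have geom (q : ℝ) (hq : q ^ 3 = 3 * q ^ 2 - q - 1) :
      (fun n => q ^ n) ∈ snortRecurrence.solSpace :=
    (snortRecurrence.geom_sol_iff_root_charPoly q).2 (snortRecurrence_isRoot_charPoly hq)
  have hsum : (fun n => (1 + √2) ^ n + (1 - √2) ^ n + 1 ^ n) ∈ snortRecurrence.solSpace :=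
    add_mem (add_mem (geom (1 + √2) (by linear_combination √2 * h2))
      (geom (1 - √2) (by linear_combination -√2 * h2))) (geom 1 (by norm_num))
  simp only [one_pow] at hsum
  exact hsum

theorem trace_snortMatrix_pow (n : ℕ) :
    trace (snortMatrix ^ n) = (1 + √2) ^ n + (1 - √2) ^ n + 1 := by
  refine congrFun ((snortRecurrence.eq_iff_eqOn_range_order _ _
    snortRecurrence_isSolution_trace_pow snortRecurrence_isSolution_closedForm).2 fun i hi => ?_) n
  obtain rfl | rfl | rfl : i = 0 ∨ i = 1 ∨ i = 2 := by simp [snortRecurrence] at hi; omega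
  all_goals simp only [trace, Matrix.diag, pow_succ, pow_zero, one_mul, mul_apply, Color.sum_univ,
    one_apply, transferMatrix, of_apply, snortCompatible]
  all_goals simp
  linear_combination -2 * Real.sq_sqrt (zero_le_two (α := ℝ))

theorem snortCycle_count (n : ℕ) (hn : 3 ≤ n) :
    (Nat.card {c : ZMod n → Color //
        ∀ i : ZMod n,
          ¬((c i = Color.Blue ∧ c (i + 1) = Color.Red) ∨
            (c i = Color.Red ∧ c (i + 1) = Color.Blue))} : ℝ) =
      (1 + Real.sqrt 2) ^ n + (1 - Real.sqrt 2) ^ n + 1 := by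
  obtain ⟨k, rfl⟩ : ∃ k, n = k + 1 := ⟨n - 1, by omega⟩
  -- `ZMod (k + 1)` is definitionally `Fin (k + 1)`, with the same cyclic `+ 1`.
  exact (natCard_cyclic_eq_trace_transferMatrix_pow ℝ snortCompatible k).trans
    (trace_snortMatrix_pow (k + 1))
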